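/- Let Γ_R = exp(G_R), Γ_B = exp(G_B), Γ_E = exp(G_E), where G_R, G_B, G_E are mutually independent real Gaussian random variables with means μ_R, μ_B, μ_E and variances σ_R² > 0, σ_B² > 0, σ_E² > 0. Then E[ (log₂(1 + min{Γ_R, Γ_B}) − log₂(1 + Γ_E))⁺ ] = (1/(8 ln 2)) ∫₀^∞ erfc((μ_E − ln(eˣ − 1))/(√2 σ_E)) · erfc((ln(eˣ − 1) − μ_B)/(√2 σ_B)) · erfc((ln(eˣ − 1) − μ_R)/(√2 σ_R)) dx. -/

import Mathlib

open MeasureTheory ProbabilityTheory Real Set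

/-- The complementary error function `erfc x = (2/√π) ∫_x^∞ e^{−t²} dt`. -/
noncomputable def erfc (x : ℝ) : ℝ :=
  (2 / Real.sqrt π) * ∫ t in Ioi x, Real.exp (-t ^ 2)

open scoped NNReal ENNReal

lemma erfc_nonneg (x : ℝ) : 0 ≤ erfc x := by
  refine mul_nonneg (by positivity) ?_
  exact setIntegral_nonneg measurableSet_Ioi fun t _ => (Real.exp_pos _).le

lemma gaussianPDFReal_half (x : ℝ) :
    gaussianPDFReal 0 (1/2 : ℝ≥0) x = (Real.sqrt π)⁻¹ * Real.exp (-x ^ 2) := by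
  have h1 : ((1/2 : ℝ≥0) : ℝ) = 1/2 := by norm_num
  simp only [gaussianPDFReal, h1, sub_zero]
  norm_num
  have h2 : Real.sqrt 2 ≠ 0 := by positivity
  have : Real.sqrt π ≠ 0 := (Real.sqrt_pos.2 Real.pi_pos).ne'
  field_simp

lemma stdGauss_integral_Ioi (y : ℝ) :
    ∫ x in Ioi y, gaussianPDFReal 0 (1/2 : ℝ≥0) x = erfc y / 2 := by
  simp_rw [gaussianPDFReal_half]
  rw [integral_const_mul, erfc]
  have : Real.sqrt π ≠ 0 := (Real.sqrt_pos.2 Real.pi_pos).ne'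
  field_simp

lemma half_ne_zero' : (1/2 : ℝ≥0) ≠ 0 := by norm_num

lemma stdGauss_Ioi (y : ℝ) :
    gaussianReal 0 (1/2 : ℝ≥0) (Ioi y) = ENNReal.ofReal (erfc y / 2) := by
  rw [gaussianReal_apply_eq_integral 0 half_ne_zero', stdGauss_integral_Ioi]

lemma stdGauss_Iio (y : ℝ) :
    gaussianReal 0 (1/2 : ℝ≥0) (Iio y) = ENNReal.ofReal (erfc (-y) / 2) := by
  rw [gaussianReal_apply_eq_integral 0 half_ne_zero']
  congr 1
  rw [setIntegral_congr_set Iio_ae_eq_Iic]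
  have := integral_comp_neg_Ioi (-y) (gaussianPDFReal 0 (1/2 : ℝ≥0))
  rw [neg_neg] at this
  rw [← this, ← stdGauss_integral_Ioi (-y)]
  refine setIntegral_congr_fun measurableSet_Ioi fun x _ => ?_
  simp [gaussianPDFReal, neg_sub]

lemma gaussReal_map_std (μ σ : ℝ) (hσ : 0 < σ) :
    (gaussianReal μ ⟨σ^2, sq_nonneg σ⟩).map
      (fun x => (Real.sqrt 2 * σ)⁻¹ * (x + -μ)) = gaussianReal 0 (1/2 : ℝ≥0) := by
  have h1 : (fun x : ℝ => (Real.sqrt 2 * σ)⁻¹ * (x + -μ))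
      = (fun y => (Real.sqrt 2 * σ)⁻¹ * y) ∘ (fun x => x + -μ) := rfl
  have hg : Measurable (fun y : ℝ => (Real.sqrt 2 * σ)⁻¹ * y) := measurable_const_mul _
  have hf : Measurable (fun x : ℝ => x + -μ) := measurable_add_const _
  rw [h1, ← Measure.map_map hg hf,
    gaussianReal_map_add_const (-μ) (v := ⟨σ^2, sq_nonneg σ⟩), add_neg_cancel, gaussianReal_map_const_mul (v := ⟨σ^2, sq_nonneg σ⟩), mul_zero]
  congr 1
  apply NNReal.coe_injective
  have h2σ : Real.sqrt 2 * σ ≠ 0 := by positivity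
  show (Real.sqrt 2 * σ)⁻¹ ^ 2 * σ ^ 2 = ((1/2 : ℝ≥0) : ℝ)
  push_cast
  field_simp
  rw [Real.sq_sqrt (by norm_num : (2:ℝ) ≥ 0)]

lemma gauss_Ioi (μ σ t : ℝ) (hσ : 0 < σ) :
    gaussianReal μ ⟨σ^2, sq_nonneg σ⟩ (Ioi t)
      = ENNReal.ofReal (erfc ((t - μ) / (Real.sqrt 2 * σ)) / 2) := by
  have hφ : Measurable (fun x : ℝ => (Real.sqrt 2 * σ)⁻¹ * (x + -μ)) :=
    (measurable_add_const _).const_mul _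
  have h2σ : (0:ℝ) < Real.sqrt 2 * σ := by positivity
  have hset : (fun x : ℝ => (Real.sqrt 2 * σ)⁻¹ * (x + -μ)) ⁻¹'
      (Ioi ((t - μ) / (Real.sqrt 2 * σ))) = Ioi t := by
    ext x
    simp only [mem_preimage, mem_Ioi, div_eq_inv_mul]
    rw [mul_lt_mul_iff_right₀ (inv_pos.2 h2σ)]
    constructor <;> intro h <;> linarith
  have := congrArg (fun m : Measure ℝ => m (Ioi ((t - μ) / (Real.sqrt 2 * σ))))
    (gaussReal_map_std μ σ hσ)
  beta_reduce at this
  rw [Measure.map_apply hφ measurableSet_Ioi, hset] at this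
  rw [this, stdGauss_Ioi]

lemma gauss_Iio (μ σ t : ℝ) (hσ : 0 < σ) :
    gaussianReal μ ⟨σ^2, sq_nonneg σ⟩ (Iio t)
      = ENNReal.ofReal (erfc ((μ - t) / (Real.sqrt 2 * σ)) / 2) := by
  have hφ : Measurable (fun x : ℝ => (Real.sqrt 2 * σ)⁻¹ * (x + -μ)) :=
    (measurable_add_const _).const_mul _
  have h2σ : (0:ℝ) < Real.sqrt 2 * σ := by positivity
  have hset : (fun x : ℝ => (Real.sqrt 2 * σ)⁻¹ * (x + -μ)) ⁻¹'
      (Iio ((t - μ) / (Real.sqrt 2 * σ))) = Iio t := by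
    ext x
    simp only [mem_preimage, mem_Iio, div_eq_inv_mul]
    rw [mul_lt_mul_iff_right₀ (inv_pos.2 h2σ)]
    constructor <;> intro h <;> linarith
  have := congrArg (fun m : Measure ℝ => m (Iio ((t - μ) / (Real.sqrt 2 * σ))))
    (gaussReal_map_std μ σ hσ)
  beta_reduce at this
  rw [Measure.map_apply hφ measurableSet_Iio, hset] at this
  rw [this, stdGauss_Iio]
  congr 2
  rw [← neg_div, neg_sub]

/-- **Average secrecy rate of the full-duplex relay channel under lognormal fading, after the
change of variables `z = eˣ − 1`** (the exact identity underlying Theorem 2 of the paper). -/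
theorem avg_secrecy_rate_lognormal_laguerre
    {Ω : Type*} [MeasurableSpace Ω] (P : Measure Ω) [IsProbabilityMeasure P]
    (GR GB GE : Ω → ℝ) (hGR : Measurable GR) (hGB : Measurable GB) (hGE : Measurable GE)
    (μR μB μE σR σB σE : ℝ) (hσR : 0 < σR) (hσB : 0 < σB) (hσE : 0 < σE)
    (hR : P.map GR = gaussianReal μR ⟨σR ^ 2, sq_nonneg σR⟩)
    (hB : P.map GB = gaussianReal μB ⟨σB ^ 2, sq_nonneg σB⟩)
    (hE : P.map GE = gaussianReal μE ⟨σE ^ 2, sq_nonneg σE⟩)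
    (hindep : iIndepFun ![GR, GB, GE] P) :
    ∫⁻ ω, ENNReal.ofReal
        (max (Real.logb 2 (1 + min (Real.exp (GR ω)) (Real.exp (GB ω)))
              - Real.logb 2 (1 + Real.exp (GE ω))) 0) ∂P
      = ENNReal.ofReal (1 / (8 * Real.log 2)) *
        ∫⁻ x in Ioi (0 : ℝ),
          ENNReal.ofReal
            (erfc ((μE - Real.log (Real.exp x - 1)) / (Real.sqrt 2 * σE))
              * erfc ((Real.log (Real.exp x - 1) - μB) / (Real.sqrt 2 * σB))
              * erfc ((Real.log (Real.exp x - 1) - μR) / (Real.sqrt 2 * σR))) := by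
  classical
  set c : ℝ := Real.log 2 with hc_def
  have hc : 0 < c := Real.log_pos one_lt_two
  set A : Ω → ℝ := fun ω => Real.log (1 + min (Real.exp (GR ω)) (Real.exp (GB ω))) with hA_def
  set B : Ω → ℝ := fun ω => Real.log (1 + Real.exp (GE ω)) with hB_def
  set L : ℝ → ℝ := fun x => Real.log (Real.exp x - 1) with hL_def
  have hA : Measurable A := Real.measurable_log.comp
    (measurable_const.add ((Real.measurable_exp.comp hGR).min (Real.measurable_exp.comp hGB)))
  have hBm : Measurable B := Real.measurable_log.comp
    (measurable_const.add (Real.measurable_exp.comp hGE))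
  have hBpos : ∀ ω, 0 < B ω := fun ω =>
    Real.log_pos (by linarith [Real.exp_pos (GE ω)])
  -- the key identity without the 1/log 2 factors
  have main : ∫⁻ ω, ENNReal.ofReal (max (A ω - B ω) 0) ∂P
      = ∫⁻ x in Ioi (0:ℝ),
          ENNReal.ofReal ((1/8) *
            (erfc ((μE - L x) / (Real.sqrt 2 * σE))
              * erfc ((L x - μB) / (Real.sqrt 2 * σB))
              * erfc ((L x - μR) / (Real.sqrt 2 * σR)))) := by
    set S : Set (ℝ × Ω) := {p | B p.2 < p.1 ∧ p.1 < A p.2} with hS_def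
    have hS : MeasurableSet S :=
      (measurableSet_lt (hBm.comp measurable_snd) measurable_fst).inter
        (measurableSet_lt measurable_fst (hA.comp measurable_snd))
    have step1 : ∀ ω, ENNReal.ofReal (max (A ω - B ω) 0)
        = ∫⁻ x in Ioi (0:ℝ), S.indicator (1 : ℝ × Ω → ℝ≥0∞) (x, ω) := by
      intro ω
      have h1 : (fun x : ℝ => S.indicator (1 : ℝ × Ω → ℝ≥0∞) (x, ω))
          = (Ioo (B ω) (A ω)).indicator (1 : ℝ → ℝ≥0∞) := by
        ext x
        simp [hS_def, Set.indicator_apply, mem_Ioo, mem_setOf_eq]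
      rw [h1, lintegral_indicator_one measurableSet_Ioo,
        Measure.restrict_apply measurableSet_Ioo]
      have hsub : Ioo (B ω) (A ω) ∩ Ioi 0 = Ioo (B ω) (A ω) :=
        inter_eq_left.mpr fun y hy => lt_trans (hBpos ω) hy.1
      rw [hsub, Real.volume_Ioo]
      rcases le_total (A ω - B ω) 0 with h | h
      · simp [max_eq_right h, ENNReal.ofReal_eq_zero.mpr h]
      · simp [max_eq_left h]
    have swap : ∫⁻ ω, ∫⁻ x in Ioi (0:ℝ),
          S.indicator (1 : ℝ × Ω → ℝ≥0∞) (x, ω) ∂volume ∂P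
        = ∫⁻ x in Ioi (0:ℝ), ∫⁻ ω, S.indicator (1 : ℝ × Ω → ℝ≥0∞) (x, ω) ∂P := by
      refine lintegral_lintegral_swap ?_
      have : Measurable fun p : Ω × ℝ => S.indicator (1 : ℝ × Ω → ℝ≥0∞) (p.2, p.1) :=
        ((measurable_const.indicator hS).comp measurable_swap)
      exact this.aemeasurable
    simp_rw [step1]
    rw [swap]
    refine setLIntegral_congr_fun measurableSet_Ioi ?_
    intro x hx
    dsimp only
    have hex : 0 < Real.exp x - 1 := by
      have := Real.exp_lt_exp.mpr (show (0:ℝ) < x from hx)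
      simp only [Real.exp_zero] at this
      linarith
    -- identify the slice
    have hslice : (fun ω => S.indicator (1 : ℝ × Ω → ℝ≥0∞) (x, ω))
        = (GR ⁻¹' Ioi (L x) ∩ GB ⁻¹' Ioi (L x) ∩ GE ⁻¹' Iio (L x)).indicator
            (1 : Ω → ℝ≥0∞) := by
      ext ω
      have h1 : B ω < x ↔ GE ω ∈ Iio (L x) := by
        rw [hB_def, mem_Iio, hL_def]
        simp only
        rw [Real.log_lt_iff_lt_exp (by positivity), Real.lt_log_iff_exp_lt hex]
        constructor <;> intro <;> linarith
      have h2 : x < A ω ↔ GR ω ∈ Ioi (L x) ∧ GB ω ∈ Ioi (L x) := by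
        rw [hA_def, mem_Ioi, mem_Ioi, hL_def]
        simp only
        rw [Real.lt_log_iff_exp_lt (by positivity),
          Real.log_lt_iff_lt_exp hex, Real.log_lt_iff_lt_exp hex]
        rw [show ∀ m:ℝ, Real.exp x < 1 + m ↔ Real.exp x - 1 < m from fun m => by constructor <;> intro <;> linarith]
        exact lt_min_iff
      simp only [Set.indicator_apply, hS_def, mem_setOf_eq, mem_inter_iff, mem_preimage]
      have : (B ω < x ∧ x < A ω) ↔ ((GR ω ∈ Ioi (L x) ∧ GB ω ∈ Ioi (L x)) ∧ GE ω ∈ Iio (L x)) := by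
        rw [h1, h2]; exact and_comm
      simp only [mem_Ioi, mem_Iio] at this
      simp only [this]
      simp [mem_Ioi, mem_Iio]
    rw [hslice, lintegral_indicator_one
      (((hGR measurableSet_Ioi).inter (hGB measurableSet_Ioi)).inter (hGE measurableSet_Iio))]
    -- independence
    have hprod : P (GR ⁻¹' Ioi (L x) ∩ GB ⁻¹' Ioi (L x) ∩ GE ⁻¹' Iio (L x))
        = P (GR ⁻¹' Ioi (L x)) * P (GB ⁻¹' Ioi (L x)) * P (GE ⁻¹' Iio (L x)) := by
      have := hindep.meas_iInter (s := ![GR ⁻¹' Ioi (L x), GB ⁻¹' Ioi (L x), GE ⁻¹' Iio (L x)])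
        (fun i => by
          fin_cases i
          · exact ⟨Ioi (L x), measurableSet_Ioi, rfl⟩
          · exact ⟨Ioi (L x), measurableSet_Ioi, rfl⟩
          · exact ⟨Iio (L x), measurableSet_Iio, rfl⟩)
      rw [show (⋂ i, ![GR ⁻¹' Ioi (L x), GB ⁻¹' Ioi (L x), GE ⁻¹' Iio (L x)] i)
          = GR ⁻¹' Ioi (L x) ∩ GB ⁻¹' Ioi (L x) ∩ GE ⁻¹' Iio (L x) by
        ext ω
        simp [Set.mem_iInter, Fin.forall_fin_succ, and_assoc]] at this
      rw [this, Fin.prod_univ_three]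
      simp
    rw [hprod]
    have mR : P (GR ⁻¹' Ioi (L x)) = ENNReal.ofReal (erfc ((L x - μR) / (Real.sqrt 2 * σR)) / 2) := by
      rw [← Measure.map_apply hGR measurableSet_Ioi, hR, gauss_Ioi _ _ _ hσR]
    have mB : P (GB ⁻¹' Ioi (L x)) = ENNReal.ofReal (erfc ((L x - μB) / (Real.sqrt 2 * σB)) / 2) := by
      rw [← Measure.map_apply hGB measurableSet_Ioi, hB, gauss_Ioi _ _ _ hσB]
    have mE : P (GE ⁻¹' Iio (L x)) = ENNReal.ofReal (erfc ((μE - L x) / (Real.sqrt 2 * σE)) / 2) := by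
      rw [← Measure.map_apply hGE measurableSet_Iio, hE, gauss_Iio _ _ _ hσE]
    have e1 : (0:ℝ) ≤ erfc ((L x - μR) / (Real.sqrt 2 * σR)) / 2 :=
      div_nonneg (erfc_nonneg _) (by norm_num)
    have e2 : (0:ℝ) ≤ erfc ((L x - μB) / (Real.sqrt 2 * σB)) / 2 :=
      div_nonneg (erfc_nonneg _) (by norm_num)
    rw [mR, mB, mE, ← ENNReal.ofReal_mul e1, ← ENNReal.ofReal_mul (mul_nonneg e1 e2)]
    congr 1
    ring
  -- now adjust constants
  have hpt : ∀ ω, ENNReal.ofReal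
      (max (Real.logb 2 (1 + min (Real.exp (GR ω)) (Real.exp (GB ω)))
        - Real.logb 2 (1 + Real.exp (GE ω))) 0)
      = ENNReal.ofReal c⁻¹ * ENNReal.ofReal (max (A ω - B ω) 0) := by
    intro ω
    rw [← ENNReal.ofReal_mul (by positivity)]
    congr 1
    simp only [Real.logb, hA_def, hB_def, hc_def]
    rw [div_sub_div_same, mul_max_of_nonneg _ _ (by positivity : (0:ℝ) ≤ (Real.log 2)⁻¹)]
    rw [mul_zero, inv_mul_eq_div]
  simp_rw [hpt]
  rw [lintegral_const_mul' _ _ ENNReal.ofReal_ne_top, main]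
  rw [show (1 / (8 * c)) = c⁻¹ * (1/8) by field_simp,
    ENNReal.ofReal_mul (by positivity), mul_assoc]
  congr 1
  rw [← lintegral_const_mul' _ _ ENNReal.ofReal_ne_top]
  refine setLIntegral_congr_fun measurableSet_Ioi fun x _ => ?_
  rw [← ENNReal.ofReal_mul (by positivity)]
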